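/- arXiv:2309.02993 — 9 statements merged into one kernel-verified Lean document; each statement's English description precedes it below -/
import Mathlib

section
/- For any triangle T with edges e1, e2, e3 in an n-vertex k-regular graph G, the sum T(e1)+T(e2)+T(e3) of the numbers of triangles containing each edge is at least 3k - n, where T(e) denotes the number of triangles of G containing edge e. -/
open Finset SimpleGraph

/-- In an `n`-vertex `k`-regular graph, for any triangle `a b c`, the sum of the numbers of
triangles containing each of its three edges is at least `3k - n`. -/
theorem stmt0 {V : Type*} [Fintype V] [DecidableEq V] (G : SimpleGraph V)
    [DecidableRel G.Adj] (n k : ℕ) (hn : Fintype.card V = n)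
    (hreg : G.IsRegularOfDegree k) (a b c : V)
    (hab : G.Adj a b) (hbc : G.Adj b c) (hac : G.Adj a c) :
    ((G.neighborFinset a ∩ G.neighborFinset b).card : ℤ) +
      (G.neighborFinset b ∩ G.neighborFinset c).card +
      (G.neighborFinset a ∩ G.neighborFinset c).card ≥ 3 * k - n := by
  set A := G.neighborFinset a
  set B := G.neighborFinset b
  set C := G.neighborFinset c
  have hA : A.card = k := by simp [A, card_neighborFinset_eq_degree, hreg a]
  have hB : B.card = k := by simp [B, card_neighborFinset_eq_degree, hreg b]
  have hC : C.card = k := by simp [C, card_neighborFinset_eq_degree, hreg c]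
  have h1 : (A ∪ B).card + (A ∩ B).card = A.card + B.card :=
    card_union_add_card_inter A B
  have h2 : (A ∪ B ∪ C).card + ((A ∪ B) ∩ C).card = (A ∪ B).card + C.card :=
    card_union_add_card_inter (A ∪ B) C
  have h3 : ((A ∪ B) ∩ C).card ≤ (A ∩ C).card + (B ∩ C).card := by
    rw [union_inter_distrib_right]
    exact card_union_le _ _
  have h4 : (A ∪ B ∪ C).card ≤ n := by
    rw [← hn]
    exact card_le_univ _
  have := h3
  zify at h1 h2 h3 h4
  linarith
end

section
/- Let G be an n-vertex k-regular graph with partition V(G) = X ∪ Y. Then T(G) >= e(X)·(2k - |Y|) - φ(G[X]), where e(X) is the number of edges inside X, φ(G[X]) is the sum of the squares of the degrees of vertices in the induced subgraph G[X], and T(G) is the number of triangles in G. -/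
/-!
For an edge `ab` inside `X`, regularity gives `a` and `b` exactly `k - d_X(a)` and `k - d_X(b)`
neighbours in `Y = Xᶜ`, so inclusion–exclusion in `Y` yields at least
`2k - |Y| - d_X(a) - d_X(b)` common neighbours in `Y`, each closing a triangle, and a triangle
with a single vertex in `Y` arises from only one edge of `G[X]`. Summing over the edges of `G[X]`,
every `x ∈ X` is counted `d_X(x)` times, which turns `Σ (d_X(a) + d_X(b))` into `φ(G[X])`.
-/

open Finset SimpleGraph

namespace SimpleGraph

variable {V : Type*}

/-- The induced graph `G[X]`, kept on the whole vertex type `V`. -/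
def inducedOn (G : SimpleGraph V) (X : Finset V) : SimpleGraph V where
  Adj u v := G.Adj u v ∧ u ∈ X ∧ v ∈ X
  symm := ⟨fun _ _ h => ⟨h.1.symm, h.2.2, h.2.1⟩⟩
  loopless := ⟨fun u h => G.loopless.irrefl u h.1⟩

@[simp]
lemma inducedOn_adj (G : SimpleGraph V) (X : Finset V) {u v : V} :
    (G.inducedOn X).Adj u v ↔ G.Adj u v ∧ u ∈ X ∧ v ∈ X :=
  Iff.rfl

variable [DecidableEq V]

instance (G : SimpleGraph V) [DecidableRel G.Adj] (X : Finset V) :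
    DecidableRel (G.inducedOn X).Adj :=
  fun u v => inferInstanceAs (Decidable (G.Adj u v ∧ u ∈ X ∧ v ∈ X))

variable [Fintype V]

lemma sum_edgeFinset_sum_toFinset {M : Type*} [AddCommMonoid M] (H : SimpleGraph V)
    [DecidableRel H.Adj] (f : V → M) :
    ∑ e ∈ H.edgeFinset, ∑ x ∈ e.toFinset, f x = ∑ x, H.degree x • f x := by
  rw [sum_comm' (t' := univ) (s' := fun x => H.incidenceFinset x) fun e x => by
    simp [incidenceSet, and_comm]]
  simp

lemma sum_edgeFinset_sum_degree (H : SimpleGraph V) [DecidableRel H.Adj] :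
    ∑ e ∈ H.edgeFinset, ∑ x ∈ e.toFinset, (H.degree x : ℤ) = ∑ x, (H.degree x : ℤ) ^ 2 := by
  simp [sum_edgeFinset_sum_toFinset, sq]

section InducedOn

variable (G : SimpleGraph V) [DecidableRel G.Adj] (X : Finset V)

lemma edgeFinset_inducedOn :
    (G.inducedOn X).edgeFinset = G.edgeFinset.filter (fun e => ∀ x ∈ e, x ∈ X) := by
  ext e
  induction e using Sym2.ind with
  | _ a b => simp

lemma neighborFinset_inducedOn {x : V} (hx : x ∈ X) :
    (G.inducedOn X).neighborFinset x = G.neighborFinset x ∩ X := by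
  ext y
  simp [hx]

lemma degree_inducedOn {x : V} (hx : x ∈ X) :
    (G.inducedOn X).degree x = #(G.neighborFinset x ∩ X) := by
  rw [← card_neighborFinset_eq_degree, neighborFinset_inducedOn G X hx]

lemma sum_sq_degree_inducedOn :
    ∑ x, ((G.inducedOn X).degree x : ℤ) ^ 2 = ∑ x ∈ X, (#(G.neighborFinset x ∩ X) : ℤ) ^ 2 := by
  have isolated (x : V) (hx : x ∉ X) : ((G.inducedOn X).degree x : ℤ) ^ 2 = 0 := by
    have : (G.inducedOn X).neighborFinset x = ∅ := by ext; simp [hx]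
    simp [← card_neighborFinset_eq_degree, this]
  rw [← sum_subset (subset_univ X) fun x _ => isolated x]
  exact sum_congr rfl fun x hx => by rw [degree_inducedOn G X hx]

def outerApexes (e : Sym2 V) : Finset V :=
  Xᶜ.filter fun w => ∀ x ∈ e, G.Adj x w

lemma outerApexes_mk (a b : V) :
    G.outerApexes X s(a, b) = (G.neighborFinset a \ X) ∩ (G.neighborFinset b \ X) := by
  ext w
  simp [outerApexes]
  tauto

lemma card_neighborFinset_sdiff {k : ℕ} (hreg : G.IsRegularOfDegree k) (a : V) :
    (#(G.neighborFinset a \ X) : ℤ) = k - #(G.neighborFinset a ∩ X) := by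
  have := card_sdiff_add_card_inter (G.neighborFinset a) X
  rw [card_neighborFinset_eq_degree, hreg a] at this
  omega

lemma sub_sum_degree_le_card_outerApexes {k : ℕ} (hreg : G.IsRegularOfDegree k) {e : Sym2 V}
    (he : e ∈ (G.inducedOn X).edgeFinset) :
    2 * k - (#Xᶜ : ℤ) - ∑ x ∈ e.toFinset, ((G.inducedOn X).degree x : ℤ)
      ≤ #(G.outerApexes X e) := by
  induction e using Sym2.ind with
  | _ a b =>
    obtain ⟨hab, ha, hb⟩ := (G.inducedOn X).mem_edgeSet.1 (mem_edgeFinset.1 he)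
    have hcover : (G.neighborFinset a \ X) ∪ (G.neighborFinset b \ X) ⊆ Xᶜ :=
      union_subset (fun _ hw => mem_compl.2 (mem_sdiff.1 hw).2)
        (fun _ hw => mem_compl.2 (mem_sdiff.1 hw).2)
    have inclusion_exclusion :=
      card_union_add_card_inter (G.neighborFinset a \ X) (G.neighborFinset b \ X)
    have hunion := card_le_card hcover
    have hA := card_neighborFinset_sdiff G X hreg a
    have hB := card_neighborFinset_sdiff G X hreg b
    rw [Sym2.toFinset_mk_eq, sum_pair (G.ne_of_adj hab), outerApexes_mk,
      degree_inducedOn G X ha, degree_inducedOn G X hb]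
    omega

lemma mem_of_mem_edgeFinset_inducedOn {e : Sym2 V} (he : e ∈ (G.inducedOn X).edgeFinset)
    {x : V} (hx : x ∈ e.toFinset) : x ∈ X := by
  rw [edgeFinset_inducedOn, mem_filter] at he
  exact he.2 x (Sym2.mem_toFinset.1 hx)

lemma notMem_of_mem_outerApexes {e : Sym2 V} {w : V} (hw : w ∈ G.outerApexes X e) : w ∉ X :=
  mem_compl.1 (mem_filter.1 hw).1

/-- A triangle with exactly one vertex outside `X` determines both that apex and the opposite
edge, so the pairs (edge of `G[X]`, outer apex) inject into the triangles. -/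
lemma sum_card_outerApexes_le_card_cliqueFinset :
    ∑ e ∈ (G.inducedOn X).edgeFinset, #(G.outerApexes X e) ≤ #(G.cliqueFinset 3) := by
  rw [← card_sigma]
  refine card_le_card_of_injOn (fun p => insert p.2 p.1.toFinset) ?_ ?_
  · rintro ⟨e, w⟩ hp
    obtain ⟨he, hw⟩ := mem_sigma.1 hp
    induction e using Sym2.ind with
    | _ a b =>
      obtain ⟨hab, -, -⟩ := (G.inducedOn X).mem_edgeSet.1 (mem_edgeFinset.1 he)
      obtain ⟨haw, hbw⟩ := Sym2.forall_mem_pair.1 (mem_filter.1 hw).2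
      simpa [Sym2.toFinset_mk_eq, is3Clique_triple_iff] using ⟨haw.symm, hbw.symm, hab⟩
  · rintro ⟨e, w⟩ hp ⟨e', w'⟩ hp' (heq : insert w e.toFinset = insert w' e'.toFinset)
    obtain ⟨he, hw⟩ := mem_sigma.1 hp
    obtain ⟨he', hw'⟩ := mem_sigma.1 hp'
    have trace {e : Sym2 V} {w : V} (he : e ∈ (G.inducedOn X).edgeFinset)
        (hw : w ∈ G.outerApexes X e) : (insert w e.toFinset).filter (· ∈ X) = e.toFinset := by
      rw [filter_insert, if_neg (G.notMem_of_mem_outerApexes X hw),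
        filter_true_of_mem fun x => G.mem_of_mem_edgeFinset_inducedOn X he]
    have hfin : e.toFinset = e'.toFinset := by rw [← trace he hw, ← trace he' hw', heq]
    obtain rfl : e = e' := Sym2.ext fun x => by rw [← Sym2.mem_toFinset, hfin, Sym2.mem_toFinset]
    rcases mem_insert.1 (heq ▸ mem_insert_self w _ : w ∈ insert w' e.toFinset) with rfl | hwe
    · rfl
    · exact absurd (G.mem_of_mem_edgeFinset_inducedOn X he hwe) (G.notMem_of_mem_outerApexes X hw)

end InducedOn

end SimpleGraph

theorem stmt6_general {V : Type*} [Fintype V] [DecidableEq V] (G : SimpleGraph V)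
    [DecidableRel G.Adj] (k : ℕ)
    (hreg : G.IsRegularOfDegree k) (X : Finset V) :
    ((G.cliqueFinset 3).card : ℤ) ≥
      ((G.edgeFinset.filter (fun e => ∀ x ∈ e, x ∈ X)).card : ℤ) *
        (2 * k - (Xᶜ : Finset V).card) -
      ∑ x ∈ X, ((G.neighborFinset x ∩ X).card : ℤ) ^ 2 := by
  rw [← edgeFinset_inducedOn, ← sum_sq_degree_inducedOn, ← sum_edgeFinset_sum_degree]
  calc ((G.cliqueFinset 3).card : ℤ)
      ≥ ∑ e ∈ (G.inducedOn X).edgeFinset, (#(G.outerApexes X e) : ℤ) := by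
        exact_mod_cast G.sum_card_outerApexes_le_card_cliqueFinset X
    _ ≥ ∑ e ∈ (G.inducedOn X).edgeFinset,
          (2 * k - (#Xᶜ : ℤ) - ∑ x ∈ e.toFinset, ((G.inducedOn X).degree x : ℤ)) :=
        sum_le_sum fun _ he => G.sub_sum_degree_le_card_outerApexes X hreg he
    _ = _ := by rw [sum_sub_distrib, sum_const, nsmul_eq_mul]

/-- For an `n`-vertex `k`-regular graph `G` with vertex partition `(X, Xᶜ)`,
`T(G) ≥ e(X)·(2k − |Xᶜ|) − φ(G[X])`, where `e(X)` is the number of edges inside `X` and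
`φ(G[X]) = Σ_{x ∈ X} d_X(x)²`. -/
theorem stmt6 {V : Type*} [Fintype V] [DecidableEq V] (G : SimpleGraph V)
    [DecidableRel G.Adj] (n k : ℕ) (hn : Fintype.card V = n)
    (hreg : G.IsRegularOfDegree k) (X : Finset V) :
    ((G.cliqueFinset 3).card : ℤ) ≥
      ((G.edgeFinset.filter (fun e => ∀ x ∈ e, x ∈ X)).card : ℤ) *
        (2 * k - (Xᶜ : Finset V).card) -
      ∑ x ∈ X, ((G.neighborFinset x ∩ X).card : ℤ) ^ 2 :=
  stmt6_general G k hreg X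
end

section
/- Let r > 4500 be a positive integer and H an n-vertex graph with maximum degree at most r and exactly βr edges for some real 1 <= β < 6/5. Then the sum of the squares of the degrees of H is at most (β² - 2β + 2)r² + (5β - 4)r. -/
open Finset SimpleGraph



lemma pair_bound {V : Type*} [Fintype V] [DecidableEq V] (H : SimpleGraph V) [DecidableRel H.Adj]
    {u v w : V} (huv : H.Adj u v) (hu : u ≠ w) (hv : v ≠ w) :
    H.degree u + H.degree v + H.degree w ≤ H.edgeFinset.card + 3 := by
  classical
  set A := H.incidenceFinset u with hA
  set B := H.incidenceFinset v with hB
  set C := H.incidenceFinset w with hC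
  have hAB : (A ∩ B).card ≤ 1 := by
    have : (A ∩ B : Finset (Sym2 V)) ⊆ {s(u, v)} := by
      intro e he
      simp only [hA, hB, mem_inter, mem_incidenceFinset] at he
      have := H.incidenceSet_inter_incidenceSet_subset huv.ne ⟨he.1, he.2⟩
      simpa using this
    simpa using Finset.card_le_card this
  have hAC : ((A ∪ B) ∩ C).card ≤ 2 := by
    have hsub : (A ∪ B) ∩ C ⊆ {s(u, w)} ∪ {s(v, w)} := by
      intro e he
      simp only [mem_inter, mem_union, hA, hB, hC, mem_incidenceFinset] at he
      obtain ⟨h1 | h1, h2⟩ := he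
      · exact mem_union_left _ (by simpa using H.incidenceSet_inter_incidenceSet_subset hu ⟨h1, h2⟩)
      · exact mem_union_right _ (by simpa using H.incidenceSet_inter_incidenceSet_subset hv ⟨h1, h2⟩)
    calc ((A ∪ B) ∩ C).card ≤ ({s(u, w)} ∪ {s(v, w)} : Finset (Sym2 V)).card :=
          Finset.card_le_card hsub
    _ ≤ 2 := le_trans (Finset.card_union_le _ _) (by simp)
  have hsubE : A ∪ B ∪ C ⊆ H.edgeFinset := by
    intro e he
    simp only [mem_union, hA, hB, hC, mem_incidenceFinset] at he
    rw [mem_edgeFinset]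
    rcases he with (h | h) | h
    · exact h.1
    · exact h.1
    · exact h.1
  have e1 : (A ∪ B).card + (A ∩ B).card = A.card + B.card := Finset.card_union_add_card_inter _ _
  have e2 : (A ∪ B ∪ C).card + ((A ∪ B) ∩ C).card = (A ∪ B).card + C.card :=
    Finset.card_union_add_card_inter _ _
  have e3 : (A ∪ B ∪ C).card ≤ H.edgeFinset.card := Finset.card_le_card hsubE
  have dA : A.card = H.degree u := by
    simp [hA, card_incidenceFinset_eq_degree]
  have dB : B.card = H.degree v := by
    simp [hB, card_incidenceFinset_eq_degree]
  have dC : C.card = H.degree w := by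
    simp [hC, card_incidenceFinset_eq_degree]
  omega

lemma main_nat {V : Type*} [Fintype V] [DecidableEq V] (H : SimpleGraph V) [DecidableRel H.Adj]
    (w : V) (k : ℕ) (hk : H.degree w + k = H.edgeFinset.card) :
    ∑ v, H.degree v ^ 2 + H.degree w ≤
      H.degree w ^ 2 + 2 * H.edgeFinset.card + k ^ 2 + 3 * k := by
  classical
  have S1 : ∑ v, H.degree v ^ 2 = ∑ v : V, ∑ _u ∈ H.neighborFinset v, H.degree v := by
    refine Finset.sum_congr rfl fun v _ => ?_
    rw [Finset.sum_const, card_neighborFinset_eq_degree, smul_eq_mul, sq]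
  have key : ∀ (f : V → ℕ) (v : V), ∑ u ∈ H.neighborFinset v, f u
      = ∑ u : V, if H.Adj v u then f u else 0 := by
    intro f v
    rw [neighborFinset_eq_filter, Finset.sum_filter]
  have S2 : ∑ v : V, ∑ u ∈ H.neighborFinset v, H.degree u = ∑ v, H.degree v ^ 2 := by
    calc ∑ v : V, ∑ u ∈ H.neighborFinset v, H.degree u
        = ∑ v : V, ∑ u : V, if H.Adj v u then H.degree u else 0 :=
          Finset.sum_congr rfl fun v _ => key (fun x => H.degree x) v
      _ = ∑ u : V, ∑ v : V, if H.Adj v u then H.degree u else 0 := Finset.sum_comm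
      _ = ∑ u : V, ∑ v : V, if H.Adj u v then H.degree u else 0 := by
          simp_rw [adj_comm]
      _ = ∑ u : V, ∑ _v ∈ H.neighborFinset u, H.degree u :=
          Finset.sum_congr rfl fun u _ => (key (fun _ => H.degree u) u).symm
      _ = ∑ v, H.degree v ^ 2 := S1.symm
  have S3 : ∑ v : V, ∑ u ∈ H.neighborFinset v, (H.degree v + H.degree u)
      = 2 * ∑ v, H.degree v ^ 2 := by
    have h : ∑ v : V, ∑ u ∈ H.neighborFinset v, (H.degree v + H.degree u)
        = (∑ v : V, ∑ _u ∈ H.neighborFinset v, H.degree v)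
          + ∑ v : V, ∑ u ∈ H.neighborFinset v, H.degree u := by
      rw [← Finset.sum_add_distrib]
      exact Finset.sum_congr rfl fun v _ => Finset.sum_add_distrib
    rw [h, ← S1, S2, two_mul]
  have hwmem : (w : V) ∈ (Finset.univ : Finset V) := Finset.mem_univ w
  have split : ∑ v : V, ∑ u ∈ H.neighborFinset v, (H.degree v + H.degree u)
      = (∑ u ∈ H.neighborFinset w, (H.degree w + H.degree u))
        + ∑ v ∈ Finset.univ.erase w, ∑ u ∈ H.neighborFinset v, (H.degree v + H.degree u) :=
    (Finset.add_sum_erase _ _ hwmem).symm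
  have hwterm : ∑ u ∈ H.neighborFinset w, (H.degree w + H.degree u)
      = H.degree w ^ 2 + ∑ u ∈ H.neighborFinset w, H.degree u := by
    rw [Finset.sum_add_distrib, Finset.sum_const, card_neighborFinset_eq_degree,
      smul_eq_mul, sq]
  have F1 : H.degree w + ∑ u ∈ H.neighborFinset w, H.degree u ≤ 2 * H.edgeFinset.card := by
    have h1 : ∑ u ∈ H.neighborFinset w, H.degree u ≤ ∑ v ∈ Finset.univ.erase w, H.degree v := by
      refine Finset.sum_le_sum_of_subset ?_
      intro u hu
      rw [Finset.mem_erase]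
      exact ⟨(H.ne_of_adj ((H.mem_neighborFinset w u).1 hu)).symm, Finset.mem_univ u⟩
    have h2 : H.degree w + ∑ v ∈ Finset.univ.erase w, H.degree v = 2 * H.edgeFinset.card := by
      rw [Finset.add_sum_erase _ (fun v => H.degree v) hwmem]
      exact H.sum_degrees_eq_twice_card_edges
    omega
  have inner : ∀ v ∈ Finset.univ.erase w,
      ∑ u ∈ H.neighborFinset v, (H.degree v + H.degree u)
        + ((H.neighborFinset v).erase w).card * H.degree w
      ≤ (if v ∈ H.neighborFinset w then H.degree v + H.degree w else 0)
        + ((H.neighborFinset v).erase w).card * (H.edgeFinset.card + 3) := by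
    intro v hv
    have hvw : v ≠ w := (Finset.mem_erase.1 hv).1
    have hbound : ∑ u ∈ (H.neighborFinset v).erase w, (H.degree v + H.degree u)
        + ((H.neighborFinset v).erase w).card * H.degree w
        ≤ ((H.neighborFinset v).erase w).card * (H.edgeFinset.card + 3) := by
      have h : ∑ u ∈ (H.neighborFinset v).erase w, (H.degree v + H.degree u + H.degree w)
          ≤ ∑ _u ∈ (H.neighborFinset v).erase w, (H.edgeFinset.card + 3) := by
        refine Finset.sum_le_sum fun u hu => ?_
        have huw : u ≠ w := (Finset.mem_erase.1 hu).1
        have hadj : H.Adj v u := (H.mem_neighborFinset v u).1 (Finset.mem_of_mem_erase hu)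
        exact pair_bound H hadj hvw huw
      rw [Finset.sum_add_distrib, Finset.sum_const, smul_eq_mul] at h
      rwa [Finset.sum_const, smul_eq_mul] at h
    by_cases hw : w ∈ H.neighborFinset v
    · have hvN : v ∈ H.neighborFinset w := by
        rw [mem_neighborFinset] at hw ⊢; exact hw.symm
      rw [if_pos hvN]
      have hsplit : ∑ u ∈ H.neighborFinset v, (H.degree v + H.degree u)
          = (H.degree v + H.degree w) + ∑ u ∈ (H.neighborFinset v).erase w,
            (H.degree v + H.degree u) :=
        (Finset.add_sum_erase _ _ hw).symm
      omega
    · have hvN : v ∉ H.neighborFinset w := by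
        rw [mem_neighborFinset] at hw ⊢; exact fun h => hw h.symm
      rw [if_neg hvN]
      rw [Finset.erase_eq_of_notMem hw] at hbound ⊢
      omega
  -- sum the inner bound
  have hsum := Finset.sum_le_sum inner
  rw [Finset.sum_add_distrib, Finset.sum_add_distrib, ← Finset.sum_mul, ← Finset.sum_mul]
    at hsum
  set K := ∑ v ∈ Finset.univ.erase w, ((H.neighborFinset v).erase w).card with hKdef
  -- evaluate T
  have hNsub : H.neighborFinset w ⊆ Finset.univ.erase w := by
    intro u hu
    rw [Finset.mem_erase]
    exact ⟨(H.ne_of_adj ((H.mem_neighborFinset w u).1 hu)).symm, Finset.mem_univ u⟩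
  have hinter : Finset.univ.erase w ∩ H.neighborFinset w = H.neighborFinset w :=
    Finset.inter_eq_right.2 hNsub
  have hT : ∑ v ∈ Finset.univ.erase w,
      (if v ∈ H.neighborFinset w then H.degree v + H.degree w else 0)
      = (∑ u ∈ H.neighborFinset w, H.degree u) + H.degree w ^ 2 := by
    rw [Finset.sum_ite_mem, hinter, Finset.sum_add_distrib, Finset.sum_const,
      card_neighborFinset_eq_degree, smul_eq_mul, sq]
  -- evaluate K
  have hKe : K + H.degree w + H.degree w = 2 * H.edgeFinset.card := by
    have hper : ∀ v ∈ Finset.univ.erase w,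
        ((H.neighborFinset v).erase w).card + (if v ∈ H.neighborFinset w then 1 else 0)
        = H.degree v := by
      intro v hv
      by_cases hw : w ∈ H.neighborFinset v
      · have hvN : v ∈ H.neighborFinset w := by
          rw [mem_neighborFinset] at hw ⊢; exact hw.symm
        rw [if_pos hvN, Finset.card_erase_of_mem hw, card_neighborFinset_eq_degree]
        have : 1 ≤ (H.neighborFinset v).card := Finset.card_pos.2 ⟨w, hw⟩
        rw [card_neighborFinset_eq_degree] at this
        omega
      · have hvN : v ∉ H.neighborFinset w := by
          rw [mem_neighborFinset] at hw ⊢; exact fun h => hw h.symm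
        rw [if_neg hvN, Finset.erase_eq_of_notMem hw, card_neighborFinset_eq_degree]
        omega
    have hsum2 : K + ∑ v ∈ Finset.univ.erase w, (if v ∈ H.neighborFinset w then 1 else 0)
        = ∑ v ∈ Finset.univ.erase w, H.degree v := by
      rw [hKdef, ← Finset.sum_add_distrib]
      exact Finset.sum_congr rfl hper
    have hcnt : ∑ v ∈ Finset.univ.erase w, (if v ∈ H.neighborFinset w then 1 else 0)
        = H.degree w := by
      rw [Finset.sum_ite_mem, hinter, Finset.sum_const, smul_eq_mul, mul_one,
        card_neighborFinset_eq_degree]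
    have h2 : H.degree w + ∑ v ∈ Finset.univ.erase w, H.degree v = 2 * H.edgeFinset.card := by
      rw [Finset.add_sum_erase _ (fun v => H.degree v) hwmem]
      exact H.sum_degrees_eq_twice_card_edges
    omega
  have hK2k : K = 2 * k := by omega
  rw [hT, hK2k] at hsum
  -- assemble
  have h2P : 2 * ∑ v, H.degree v ^ 2
      = (H.degree w ^ 2 + ∑ u ∈ H.neighborFinset w, H.degree u)
        + ∑ v ∈ Finset.univ.erase w, ∑ u ∈ H.neighborFinset v, (H.degree v + H.degree u) := by
    rw [← S3, split, hwterm]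
  nlinarith [hsum, F1, h2P, hk]


/-- Lo's lemma: if `r > 4500`, `Δ(H) ≤ r` and `e(H) = βr` with `1 ≤ β < 6/5`, then
`φ(H) ≤ (β² − 2β + 2)r² + (5β − 4)r`. -/
theorem stmt7 {V : Type*} [Fintype V] (H : SimpleGraph V) [DecidableRel H.Adj]
    (r : ℕ) (hr : 4500 < r) (β : ℝ) (hβ1 : 1 ≤ β) (hβ2 : β < 6 / 5)
    (hΔ : ∀ v : V, H.degree v ≤ r)
    (he : (H.edgeFinset.card : ℝ) = β * r) :
    (∑ v : V, (H.degree v : ℝ) ^ 2) ≤ (β ^ 2 - 2 * β + 2) * r ^ 2 + (5 * β - 4) * r := by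
  classical
  have hr' : (4500 : ℝ) < r := by exact_mod_cast hr
  rcases isEmpty_or_nonempty V with hV | hV
  · rw [Finset.univ_eq_empty, Finset.sum_empty]
    nlinarith [sq_nonneg (β - 1), sq_nonneg (r : ℝ)]
  · obtain ⟨w, -, hmax⟩ := Finset.exists_max_image Finset.univ (fun v => H.degree v) Finset.univ_nonempty
    have hΔr : H.degree w ≤ r := hΔ w
    have hrE : r ≤ H.edgeFinset.card := by
      by_contra hcon
      push_neg at hcon
      have : (H.edgeFinset.card : ℝ) < r := by exact_mod_cast hcon
      nlinarith
    by_cases hcase : (H.degree w : ℝ) < (β - 1) * r + 2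
    · -- small max degree
      have hb : ∑ v : V, (H.degree v : ℝ) ^ 2
          ≤ (H.degree w : ℝ) * ∑ v : V, (H.degree v : ℝ) := by
        rw [Finset.mul_sum]
        refine Finset.sum_le_sum fun v _ => ?_
        have h1 : (H.degree v : ℝ) ≤ H.degree w := by
          exact_mod_cast hmax v (Finset.mem_univ v)
        have h2 : (0 : ℝ) ≤ H.degree v := by positivity
        nlinarith
      have hsumdeg : ∑ v : V, (H.degree v : ℝ) = 2 * (β * r) := by
        rw [← he]
        exact_mod_cast H.sum_degrees_eq_twice_card_edges
      rw [hsumdeg] at hb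
      have hx0 : (0 : ℝ) ≤ H.degree w := by positivity
      nlinarith [mul_nonneg hx0 (by positivity : (0:ℝ) ≤ (r:ℝ)), sq_nonneg (β - 1),
        mul_nonneg (sub_nonneg.2 hβ1) (by positivity : (0:ℝ) ≤ (r:ℝ)),
        mul_pos (by linarith : (0:ℝ) < 6/5 - β) (by linarith : (0:ℝ) < (r:ℝ))]
    · -- large max degree
      push_neg at hcase
      have hΔE : H.degree w ≤ H.edgeFinset.card := le_trans hΔr hrE
      have hmain := main_nat H w (H.edgeFinset.card - H.degree w) (by omega)
      have hkcast : ((H.edgeFinset.card - H.degree w : ℕ) : ℝ)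
          = β * r - H.degree w := by
        rw [Nat.cast_sub hΔE, he]
      have hmainR : (∑ v : V, (H.degree v : ℝ) ^ 2) + H.degree w
          ≤ (H.degree w : ℝ) ^ 2 + 2 * (β * r) + (β * r - H.degree w) ^ 2
            + 3 * (β * r - H.degree w) := by
        have := hmain
        have hcast : ((∑ v, H.degree v ^ 2 : ℕ) : ℝ) + H.degree w
            ≤ (H.degree w : ℝ) ^ 2 + 2 * H.edgeFinset.card
              + ((H.edgeFinset.card - H.degree w : ℕ) : ℝ) ^ 2
              + 3 * ((H.edgeFinset.card - H.degree w : ℕ) : ℝ) := by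
          exact_mod_cast this
        rw [hkcast, he] at hcast
        calc (∑ v : V, (H.degree v : ℝ) ^ 2) + H.degree w
            = ((∑ v, H.degree v ^ 2 : ℕ) : ℝ) + H.degree w := by push_cast; ring
          _ ≤ _ := hcast
      have hxr : (H.degree w : ℝ) ≤ r := by exact_mod_cast hΔr
      nlinarith [mul_nonneg (sub_nonneg.2 hxr)
          (by nlinarith : (0:ℝ) ≤ 2 * (H.degree w : ℝ) + 2 * r - 2 * (β * r) - 4)]
end

section
/- If G is an n-vertex k-regular graph with n odd and k >= (n+1)/2, then G contains more than n²/12 triangles. -/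
/-!
Since `2k > n`, the neighbourhoods of the two ends of any edge intersect, so every edge lies
in a triangle. A triangle has three edges, hence `3 T(G) ≥ |E(G)| = nk/2 ≥ n(n+1)/4 > n²/4`.
-/

open Finset SimpleGraph

namespace SimpleGraph

variable {V : Type*} [Fintype V] (G : SimpleGraph V) [DecidableRel G.Adj]

theorem IsRegularOfDegree.two_mul_card_edgeFinset {k : ℕ} (hreg : G.IsRegularOfDegree k) :
    2 * #G.edgeFinset = Fintype.card V * k := by
  rw [← sum_degrees_eq_twice_card_edges, sum_congr rfl fun v _ ↦ hreg.degree_eq v, sum_const,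
    card_univ, smul_eq_mul]

variable [DecidableEq V]

theorem exists_adj_adj_of_card_lt_degree_add_degree {x y : V}
    (h : Fintype.card V < G.degree x + G.degree y) : ∃ z, G.Adj x z ∧ G.Adj y z := by
  obtain ⟨z, hz⟩ : (G.neighborFinset x ∩ G.neighborFinset y).Nonempty := by
    rw [← card_pos]
    have := card_inter_add_card_union (G.neighborFinset x) (G.neighborFinset y)
    have := card_le_univ (G.neighborFinset x ∪ G.neighborFinset y)
    rw [card_neighborFinset_eq_degree, card_neighborFinset_eq_degree] at *
    omega
  rw [mem_inter, mem_neighborFinset, mem_neighborFinset] at hz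
  exact ⟨z, hz⟩

theorem card_edgeFinset_le_three_mul_card_cliqueFinset_three
    (h : ∀ ⦃x y⦄, G.Adj x y → ∃ z, G.Adj x z ∧ G.Adj y z) :
    #G.edgeFinset ≤ 3 * #(G.cliqueFinset 3) := by
  rw [mul_comm, ← mul_one #G.edgeFinset]
  refine card_mul_le_card_mul (fun e s ↦ e ∈ s.sym2) ?_ ?_
  · simp only [Sym2.forall, mem_edgeFinset, mem_edgeSet, Nat.one_le_iff_ne_zero, ne_eq,
      card_eq_zero, ← nonempty_iff_ne_empty]
    intro x y hxy
    obtain ⟨z, hxz, hyz⟩ := h hxy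
    exact ⟨{x, y, z}, by simp [is3Clique_triple_iff, hxy, hxz, hyz]⟩
  · simp only [mem_cliqueFinset_iff, is3Clique_iff, forall_exists_index, and_imp]
    rintro _ a b c hab hac hbc rfl
    calc
      _ ≤ #{s(a, b), s(a, c), s(b, c)} := card_le_card ?_
      _ ≤ 3 := card_le_three
    simp only [subset_iff, Sym2.forall, mem_sym2_iff, mem_bipartiteBelow, mem_insert,
      mem_edgeFinset, mem_singleton, and_imp, mem_edgeSet, Sym2.mem_iff, forall_eq_or_imp,
      forall_eq]
    rintro d e hde (rfl | rfl | rfl) (rfl | rfl | rfl) <;> simp [*] at *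

end SimpleGraph

/-- An `n`-vertex `k`-regular graph with `n` odd and `k ≥ (n+1)/2` has more than `n²/12`
triangles. -/
theorem stmt9 {V : Type*} [Fintype V] [DecidableEq V] (G : SimpleGraph V)
    [DecidableRel G.Adj] (n k : ℕ) (hn : Fintype.card V = n) (hodd : Odd n)
    (hk : 2 * k ≥ n + 1) (hreg : G.IsRegularOfDegree k) :
    ((G.cliqueFinset 3).card : ℝ) > (n : ℝ) ^ 2 / 12 := by
  have hedges : #G.edgeFinset ≤ 3 * #(G.cliqueFinset 3) :=
    G.card_edgeFinset_le_three_mul_card_cliqueFinset_three fun x y _ ↦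
      G.exists_adj_adj_of_card_lt_degree_add_degree (by rw [hreg.degree_eq, hreg.degree_eq]; omega)
  have hcount : 2 * #G.edgeFinset = n * k := hn ▸ hreg.two_mul_card_edgeFinset
  have hlt : n ^ 2 < 12 * #(G.cliqueFinset 3) :=
    calc n ^ 2 < n * (n + 1) := by nlinarith [hodd.pos]
      _ ≤ n * (2 * k) := Nat.mul_le_mul_left n hk
      _ = 4 * #G.edgeFinset := by linarith
      _ ≤ 12 * #(G.cliqueFinset 3) := by omega
  rw [gt_iff_lt, div_lt_iff₀ (by norm_num)]
  exact_mod_cast hlt.trans_eq (mul_comm _ _)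
end

section
/- Every graph G in the family 𝒢(n,k) is k-regular, every triangle of G contains the special vertex v, and the total number of triangles of G equals (k/4)(3k - n - 1). -/
open Finset SimpleGraph

/-- Every graph in the family `𝒢(n,k)` is `k`-regular, all of its triangles contain the special
vertex `v`, and it has exactly `(k/4)(3k − n − 1)` triangles.  The membership of `G` in
`𝒢(n,k)` is spelled out structurally: `V(G) = {v} ∪ X ∪ Y` with `|X| = |Y| = (n−1)/2`,
`A ⊆ X` and `B ⊆ Y` with `|A| = |B| = k/2`, `v` is joined exactly to `A ∪ B`, `X` and `Y` are
independent sets, every vertex of `A` is joined to all of `Y` except `d₁ = (n−2k+1)/2`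
vertices of `B` (and symmetrically for `B`), and every vertex of `X∖A` is joined to all of
`Y` except `d₂ = (n−2k−1)/2` vertices of `Y∖B` (and symmetrically for `Y∖B`) — i.e. the
deleted edges form a `d₁`-factor between `A` and `B` and a `d₂`-factor between `X∖A` and
`Y∖B`. -/
theorem stmt10 {V : Type*} [Fintype V] [DecidableEq V] (G : SimpleGraph V)
    [DecidableRel G.Adj] (n k d₁ d₂ : ℕ) (hn : Fintype.card V = n)
    (hodd : Odd n) (heven : Even k) (hk1 : 2 * n < 5 * k) (hk2 : 2 * k < n)
    (X Y : Finset V) (A B : Finset V) (v : V)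
    (hvX : v ∉ X) (hvY : v ∉ Y) (hXY : Disjoint X Y)
    (hcover : insert v (X ∪ Y) = Finset.univ)
    (hXcard : 2 * X.card + 1 = n) (hYcard : 2 * Y.card + 1 = n)
    (hA : A ⊆ X) (hB : B ⊆ Y) (hAcard : 2 * A.card = k) (hBcard : 2 * B.card = k)
    (hd₁ : 2 * d₁ + 2 * k = n + 1) (hd₂ : 2 * d₂ + 2 * k + 1 = n)
    (hvAdj : ∀ w : V, G.Adj v w ↔ w ∈ A ∪ B)
    (hXind : ∀ x ∈ X, ∀ x' ∈ X, ¬ G.Adj x x')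
    (hYind : ∀ y ∈ Y, ∀ y' ∈ Y, ¬ G.Adj y y')
    (hAfac : ∀ a ∈ A, (Y.filter fun y => ¬ G.Adj a y) ⊆ B ∧
      (Y.filter fun y => ¬ G.Adj a y).card = d₁)
    (hBfac : ∀ b ∈ B, (X.filter fun x => ¬ G.Adj x b) ⊆ A ∧
      (X.filter fun x => ¬ G.Adj x b).card = d₁)
    (hXAfac : ∀ x ∈ X \ A, (Y.filter fun y => ¬ G.Adj x y) ⊆ Y \ B ∧
      (Y.filter fun y => ¬ G.Adj x y).card = d₂)
    (hYBfac : ∀ y ∈ Y \ B, (X.filter fun x => ¬ G.Adj x y) ⊆ X \ A ∧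
      (X.filter fun x => ¬ G.Adj x y).card = d₂) :
    G.IsRegularOfDegree k ∧
    (∀ t ∈ G.cliqueFinset 3, v ∈ t) ∧
    (4 * ((G.cliqueFinset 3).card : ℤ) = k * (3 * k - n - 1)) := by
  have hmem : ∀ w : V, w = v ∨ w ∈ X ∨ w ∈ Y := by
    intro w
    have hw : w ∈ insert v (X ∪ Y) := by rw [hcover]; exact mem_univ w
    simpa [Finset.mem_insert, Finset.mem_union] using hw
  have hAB : Disjoint A B := hXY.mono hA hB
  have hvA : v ∉ A := fun h => hvX (hA h)
  have hvB : v ∉ B := fun h => hvY (hB h)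
  -- Part 1 : regularity
  have hreg : G.IsRegularOfDegree k := by
    intro w
    rw [← card_neighborFinset_eq_degree]
    rcases hmem w with rfl | hw | hw
    · have hset : G.neighborFinset w = A ∪ B := by
        ext u; simp [mem_neighborFinset, hvAdj]
      rw [hset, card_union_of_disjoint hAB]
      omega
    · by_cases hwA : w ∈ A
      · have hset : G.neighborFinset w = insert v (Y.filter fun y => G.Adj w y) := by
          ext u
          simp only [mem_neighborFinset, mem_insert, mem_filter]
          constructor
          · intro hu
            rcases hmem u with rfl | hu' | hu'
            · exact Or.inl rfl
            · exact absurd hu (hXind w hw u hu')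
            · exact Or.inr ⟨hu', hu⟩
          · rintro (rfl | ⟨hu', hadj⟩)
            · exact ((hvAdj w).2 (mem_union_left _ hwA)).symm
            · exact hadj
        have hvnot : v ∉ Y.filter fun y => G.Adj w y := fun h => hvY (mem_filter.1 h).1
        have hcnt := Finset.card_filter_add_card_filter_not
          (s := Y) (p := fun y => G.Adj w y)
        have hd := (hAfac w hwA).2
        rw [hset, card_insert_of_notMem hvnot]
        omega
      · have hwB : w ∉ B := fun h => Finset.disjoint_left.1 hXY hw (hB h)
        have hset : G.neighborFinset w = Y.filter fun y => G.Adj w y := by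
          ext u
          simp only [mem_neighborFinset, mem_filter]
          constructor
          · intro hu
            rcases hmem u with rfl | hu' | hu'
            · have hAB' : w ∈ A ∪ B := (hvAdj w).1 hu.symm
              rcases mem_union.1 hAB' with h | h
              · exact absurd h hwA
              · exact absurd h hwB
            · exact absurd hu (hXind w hw u hu')
            · exact ⟨hu', hu⟩
          · exact fun h => h.2
        have hcnt := Finset.card_filter_add_card_filter_not
          (s := Y) (p := fun y => G.Adj w y)
        have hd := (hXAfac w (mem_sdiff.2 ⟨hw, hwA⟩)).2
        rw [hset]
        omega
    · by_cases hwB : w ∈ B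
      · have hset : G.neighborFinset w = insert v (X.filter fun x => G.Adj x w) := by
          ext u
          simp only [mem_neighborFinset, mem_insert, mem_filter]
          constructor
          · intro hu
            rcases hmem u with rfl | hu' | hu'
            · exact Or.inl rfl
            · exact Or.inr ⟨hu', hu.symm⟩
            · exact absurd hu (hYind w hw u hu')
          · rintro (rfl | ⟨hu', hadj⟩)
            · exact ((hvAdj w).2 (mem_union_right _ hwB)).symm
            · exact hadj.symm
        have hvnot : v ∉ X.filter fun x => G.Adj x w := fun h => hvX (mem_filter.1 h).1
        have hcnt := Finset.card_filter_add_card_filter_not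
          (s := X) (p := fun x => G.Adj x w)
        have hd := (hBfac w hwB).2
        rw [hset, card_insert_of_notMem hvnot]
        omega
      · have hwA : w ∉ A := fun h => Finset.disjoint_right.1 hXY hw (hA h)
        have hset : G.neighborFinset w = X.filter fun x => G.Adj x w := by
          ext u
          simp only [mem_neighborFinset, mem_filter]
          constructor
          · intro hu
            rcases hmem u with rfl | hu' | hu'
            · have hAB' : w ∈ A ∪ B := (hvAdj w).1 hu.symm
              rcases mem_union.1 hAB' with h | h
              · exact absurd h hwA
              · exact absurd h hwB
            · exact ⟨hu', hu.symm⟩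
            · exact absurd hu (hYind w hw u hu')
          · exact fun h => h.2.symm
        have hcnt := Finset.card_filter_add_card_filter_not
          (s := X) (p := fun x => G.Adj x w)
        have hd := (hYBfac w (mem_sdiff.2 ⟨hw, hwB⟩)).2
        rw [hset]
        omega
  -- Part 2 : every triangle contains v
  have htri : ∀ t ∈ G.cliqueFinset 3, v ∈ t := by
    intro t ht
    rw [mem_cliqueFinset_iff] at ht
    by_contra hv
    have h1 : (t ∩ X).card ≤ 1 := by
      refine card_le_one.2 fun a ha b hb => ?_
      by_contra hne
      exact hXind a (mem_inter.1 ha).2 b (mem_inter.1 hb).2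
        (ht.1 (Finset.mem_coe.2 (mem_inter.1 ha).1) (Finset.mem_coe.2 (mem_inter.1 hb).1) hne)
    have h2 : (t ∩ Y).card ≤ 1 := by
      refine card_le_one.2 fun a ha b hb => ?_
      by_contra hne
      exact hYind a (mem_inter.1 ha).2 b (mem_inter.1 hb).2
        (ht.1 (Finset.mem_coe.2 (mem_inter.1 ha).1) (Finset.mem_coe.2 (mem_inter.1 hb).1) hne)
    have hsub : t ⊆ (t ∩ X) ∪ (t ∩ Y) := by
      intro w hw
      rcases hmem w with rfl | h | h
      · exact absurd hw hv
      · exact mem_union_left _ (mem_inter.2 ⟨hw, h⟩)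
      · exact mem_union_right _ (mem_inter.2 ⟨hw, h⟩)
    have hle := (card_le_card hsub).trans (card_union_le _ _)
    have hc3 := ht.2
    omega
  -- Part 3 : counting triangles
  have hScard : ∀ a ∈ A, (B.filter fun b => G.Adj a b).card + d₁ = B.card := by
    intro a ha
    have h1 := hAfac a ha
    have heq : (B.filter fun b => ¬ G.Adj a b) = (Y.filter fun y => ¬ G.Adj a y) := by
      apply Finset.Subset.antisymm
      · exact Finset.monotone_filter_left _ hB
      · intro y hy
        exact mem_filter.2 ⟨h1.1 hy, (mem_filter.1 hy).2⟩
    have hcnt := Finset.card_filter_add_card_filter_not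
      (s := B) (p := fun b => G.Adj a b)
    rw [heq, h1.2] at hcnt
    exact hcnt
  set S := (A ×ˢ B).filter (fun p => G.Adj p.1 p.2) with hS
  have hfib : ∀ a ∈ A, (S.filter fun p => p.1 = a) =
      (B.filter fun b => G.Adj a b).image (fun b => (a, b)) := by
    intro a ha
    ext ⟨x, y⟩
    simp only [hS, mem_filter, mem_product, mem_image]
    constructor
    · rintro ⟨⟨⟨hx, hy⟩, hadj⟩, rfl⟩
      exact ⟨y, ⟨hy, hadj⟩, rfl⟩
    · rintro ⟨b, ⟨hb, hadj⟩, heq⟩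
      obtain ⟨rfl, rfl⟩ := Prod.mk.inj heq
      exact ⟨⟨⟨ha, hb⟩, hadj⟩, rfl⟩
  have hSsum : S.card = ∑ a ∈ A, (B.filter fun b => G.Adj a b).card := by
    rw [Finset.card_eq_sum_card_fiberwise (f := Prod.fst) (t := A)
      (fun p hp => (mem_product.1 (mem_filter.1 hp).1).1)]
    refine Finset.sum_congr rfl fun a ha => ?_
    rw [hfib a ha]
    exact Finset.card_image_of_injective _ (fun b b' h => (Prod.mk.inj h).2)
  have hStot : S.card + A.card * d₁ = A.card * B.card := by
    have : ∑ a ∈ A, ((B.filter fun b => G.Adj a b).card + d₁) = A.card * B.card := by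
      rw [Finset.sum_congr rfl (fun a ha => hScard a ha), Finset.sum_const, smul_eq_mul]
    rw [hSsum]
    rw [Finset.sum_add_distrib, Finset.sum_const, smul_eq_mul] at this
    exact this
  have hbij : S.card = (G.cliqueFinset 3).card := by
    refine Finset.card_bij (fun p _ => insert v (insert p.1 {p.2})) ?_ ?_ ?_
    · rintro ⟨a, b⟩ hp
      obtain ⟨⟨ha, hb⟩, hadj⟩ : (a ∈ A ∧ b ∈ B) ∧ G.Adj a b := by
        simpa [hS, mem_product] using hp
      rw [mem_cliqueFinset_iff, is3Clique_triple_iff]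
      refine ⟨(hvAdj a).2 (mem_union_left _ ha), (hvAdj b).2 (mem_union_right _ hb), hadj⟩
    · rintro ⟨a, b⟩ hp ⟨a', b'⟩ hp' heq
      simp only [] at heq
      obtain ⟨⟨ha, hb⟩, -⟩ : (a ∈ A ∧ b ∈ B) ∧ G.Adj a b := by
        simpa [hS, mem_product] using hp
      obtain ⟨⟨ha', hb'⟩, -⟩ : (a' ∈ A ∧ b' ∈ B) ∧ G.Adj a' b' := by
        simpa [hS, mem_product] using hp'
      have haa : a = a' := by
        have : a ∈ insert v (insert a' ({b'} : Finset V)) := by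
          rw [← heq]; exact mem_insert_of_mem (mem_insert_self _ _)
        rcases mem_insert.1 this with h | h
        · exact absurd (h ▸ hA ha) hvX
        rcases mem_insert.1 h with h | h
        · exact h
        · rw [mem_singleton] at h
          exact absurd (hA ha) (fun hx => Finset.disjoint_left.1 hXY hx (h ▸ hB hb'))
      have hbb : b = b' := by
        have : b ∈ insert v (insert a' ({b'} : Finset V)) := by
          rw [← heq]; exact mem_insert_of_mem (mem_insert_of_mem (mem_singleton_self _))
        rcases mem_insert.1 this with h | h
        · exact absurd (h ▸ hB hb) hvY
        rcases mem_insert.1 h with h | h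
        · exact absurd (hB hb) (fun hy => Finset.disjoint_right.1 hXY hy (h ▸ hA ha'))
        · exact mem_singleton.1 h
      simp [haa, hbb]
    · intro t ht
      have hvt : v ∈ t := htri t ht
      rw [mem_cliqueFinset_iff] at ht
      have hcard2 : (t.erase v).card = 2 := by
        rw [card_erase_of_mem hvt, ht.2]
      obtain ⟨a, b, hab, habeq⟩ := Finset.card_eq_two.1 hcard2
      have hat : a ∈ t := (erase_subset _ _) (habeq ▸ mem_insert_self a {b})
      have hbt : b ∈ t := (erase_subset _ _) (habeq ▸ mem_insert_of_mem (mem_singleton_self b))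
      have hav : a ≠ v := ne_of_mem_erase (habeq ▸ mem_insert_self a {b})
      have hbv : b ≠ v := ne_of_mem_erase (habeq ▸ mem_insert_of_mem (mem_singleton_self b))
      have hvadja : G.Adj v a := ht.1 (Finset.mem_coe.2 hvt) (Finset.mem_coe.2 hat) (Ne.symm hav)
      have hvadjb : G.Adj v b := ht.1 (Finset.mem_coe.2 hvt) (Finset.mem_coe.2 hbt) (Ne.symm hbv)
      have hadjab : G.Adj a b := ht.1 (Finset.mem_coe.2 hat) (Finset.mem_coe.2 hbt) hab
      have haAB := mem_union.1 ((hvAdj a).1 hvadja)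
      have hbAB := mem_union.1 ((hvAdj b).1 hvadjb)
      have hteq : t = insert v (insert a ({b} : Finset V)) := by
        rw [← habeq, insert_erase hvt]
      rcases haAB with haA | haB
      · rcases hbAB with hbA | hbB
        · exact absurd hadjab (hXind a (hA haA) b (hA hbA))
        · refine ⟨(a, b), ?_, hteq.symm⟩
          simp [hS, mem_product, haA, hbB, hadjab]
      · rcases hbAB with hbA | hbB
        · refine ⟨(b, a), ?_, ?_⟩
          · simp [hS, mem_product, hbA, haB, hadjab.symm]
          · rw [hteq]
            simp [Finset.insert_comm, Finset.pair_comm]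
        · exact absurd hadjab (hYind a (hB haB) b (hB hbB))
  refine ⟨hreg, htri, ?_⟩
  rw [← hbij]
  have hZ : (S.card : ℤ) + A.card * d₁ = A.card * B.card := by exact_mod_cast hStot
  have hAZ : 2 * (A.card : ℤ) = k := by exact_mod_cast hAcard
  have hBZ : 2 * (B.card : ℤ) = k := by exact_mod_cast hBcard
  have hdZ : 2 * (d₁ : ℤ) + 2 * k = n + 1 := by exact_mod_cast hd₁
  nlinarith [hZ, hAZ, hBZ, hdZ]
end

section
/- Let G' be a triangle-free graph on n vertices containing a 5-cycle u1 ... u5, and set N_i = N(u_{i-1}) ∩ N(u_{i+1}) (indices mod 5). Then for each i, |N_i| >= deg(u_{i-1}) + deg(u_i) + deg(u_{i+1}) - n. -/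
open Finset SimpleGraph

/-- In a triangle-free graph on `n` vertices with a 5-cycle `u₀ … u₄`, each set
`N_i = N(u_{i-1}) ∩ N(u_{i+1})` satisfies `|N_i| ≥ deg u_{i-1} + deg u_i + deg u_{i+1} − n`. -/
theorem stmt12 {V : Type*} [Fintype V] [DecidableEq V] (G : SimpleGraph V)
    [DecidableRel G.Adj] (n : ℕ) (hn : Fintype.card V = n) (hfree : G.CliqueFree 3)
    (u : Fin 5 → V) (hinj : Function.Injective u)
    (hcyc : ∀ i : Fin 5, G.Adj (u i) (u (i + 1))) :
    ∀ i : Fin 5,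
      ((G.neighborFinset (u (i - 1)) ∩ G.neighborFinset (u (i + 1))).card : ℤ) ≥
        G.degree (u (i - 1)) + G.degree (u i) + G.degree (u (i + 1)) - n := by
  intro i
  set a := u (i - 1) with ha
  set b := u i with hb
  set c := u (i + 1) with hc
  have hab : G.Adj a b := by
    have := hcyc (i - 1)
    simpa [ha, hb, sub_add_cancel] using this
  have hbc : G.Adj b c := hcyc i
  have disj : ∀ x y : V, G.Adj x y →
      Disjoint (G.neighborFinset x) (G.neighborFinset y) := by
    intro x y hxy
    rw [Finset.disjoint_left]
    intro v hvx hvy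
    rw [mem_neighborFinset] at hvx hvy
    exact hfree {x, y, v} (is3Clique_triple_iff.2 ⟨hxy, hvx, hvy⟩)
  have hAB : Disjoint (G.neighborFinset a ∪ G.neighborFinset c)
      (G.neighborFinset b) := by
    rw [Finset.disjoint_union_left]
    exact ⟨disj a b hab, (disj b c hbc).symm⟩
  have hsub : (G.neighborFinset a ∪ G.neighborFinset c).card +
      (G.neighborFinset b).card ≤ n := by
    rw [← Finset.card_union_of_disjoint hAB, ← hn]
    exact Finset.card_le_univ _
  have hie : (G.neighborFinset a ∩ G.neighborFinset c).card +
      (G.neighborFinset a ∪ G.neighborFinset c).card =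
      (G.neighborFinset a).card + (G.neighborFinset c).card :=
    Finset.card_inter_add_card_union _ _
  have hda : G.degree a = (G.neighborFinset a).card := rfl
  have hdb : G.degree b = (G.neighborFinset b).card := rfl
  have hdc : G.degree c = (G.neighborFinset c).card := rfl
  rw [hda, hdb, hdc]
  push_cast
  omega
end

section
/- Let G' be a triangle-free graph on n vertices containing a 5-cycle u1 ... u5. Then the sum of the degrees of u1, ..., u5 in G' is at most 2n. -/
open Finset SimpleGraph

lemma fin5_consec : ∀ S : Finset (Fin 5), 3 ≤ S.card → ∃ i : Fin 5, i ∈ S ∧ i + 1 ∈ S := by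
  decide

/-- In a triangle-free graph on `n` vertices with a 5-cycle `u₀ … u₄`, the degrees of the
five cycle vertices sum to at most `2n`. -/
theorem stmt13 {V : Type*} [Fintype V] [DecidableEq V] (G : SimpleGraph V)
    [DecidableRel G.Adj] (n : ℕ) (hn : Fintype.card V = n) (hfree : G.CliqueFree 3)
    (u : Fin 5 → V) (hinj : Function.Injective u)
    (hcyc : ∀ i : Fin 5, G.Adj (u i) (u (i + 1))) :
    ∑ i : Fin 5, G.degree (u i) ≤ 2 * n := by
  have key : ∀ v : V, ((univ : Finset (Fin 5)).filter (fun i => G.Adj (u i) v)).card ≤ 2 := by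
    intro v
    by_contra h
    push_neg at h
    obtain ⟨i, hi, hi1⟩ := fin5_consec _ h
    simp only [mem_filter] at hi hi1
    exact hfree {u i, u (i+1), v} (is3Clique_iff.mpr ⟨u i, u (i+1), v,
      hcyc i, hi.2, hi1.2, rfl⟩)
  calc ∑ i : Fin 5, G.degree (u i)
      = ∑ i : Fin 5, ∑ v : V, if G.Adj (u i) v then 1 else 0 := by
        refine Finset.sum_congr rfl fun i _ => ?_
        rw [SimpleGraph.degree, neighborFinset_eq_filter, Finset.card_filter]
    _ = ∑ v : V, ∑ i : Fin 5, if G.Adj (u i) v then 1 else 0 := Finset.sum_comm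
    _ ≤ ∑ v : V, 2 := by
        refine Finset.sum_le_sum fun v _ => ?_
        rw [← Finset.card_filter]
        exact key v
    _ = 2 * n := by simp [hn, mul_comm]
end

section
/- Let G' be triangle-free with a 5-cycle v1...v5 and N_i = N(v_{i-1}) ∩ N(v_{i+1}) (indices mod 5). Then for every i, |N_{i-1}| + |N_{i+1}| <= deg(v_i). -/
open Finset SimpleGraph

/-- In a triangle-free graph with a 5-cycle `v₀ … v₄` and `N_i = N(v_{i-1}) ∩ N(v_{i+1})`,
for every `i` we have `|N_{i-1}| + |N_{i+1}| ≤ deg(v_i)`. -/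
theorem stmt15 {V : Type*} [Fintype V] [DecidableEq V] (G : SimpleGraph V)
    [DecidableRel G.Adj] (hfree : G.CliqueFree 3)
    (v : Fin 5 → V) (hinj : Function.Injective v)
    (hcyc : ∀ i : Fin 5, G.Adj (v i) (v (i + 1))) :
    ∀ i : Fin 5,
      (G.neighborFinset (v (i - 2)) ∩ G.neighborFinset (v i)).card +
        (G.neighborFinset (v i) ∩ G.neighborFinset (v (i + 2))).card ≤ G.degree (v i) := by
  intro i
  have hadj : G.Adj (v (i + 2)) (v (i - 2)) := by
    have := hcyc (i + 2)
    have h : i + 2 + 1 = i - 2 := by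
      simp only [Fin.ext_iff, Fin.add_def, Fin.sub_def]
      omega
    rwa [h] at this
  have hdisj : Disjoint (G.neighborFinset (v (i - 2)) ∩ G.neighborFinset (v i))
      (G.neighborFinset (v i) ∩ G.neighborFinset (v (i + 2))) := by
    rw [Finset.disjoint_left]
    intro x hx hy
    simp only [Finset.mem_inter, mem_neighborFinset] at hx hy
    exact hfree {x, v (i + 2), v (i - 2)}
      (is3Clique_triple_iff.2 ⟨hy.2.symm, hx.1.symm, hadj⟩)
  calc (G.neighborFinset (v (i - 2)) ∩ G.neighborFinset (v i)).card +
        (G.neighborFinset (v i) ∩ G.neighborFinset (v (i + 2))).card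
      = ((G.neighborFinset (v (i - 2)) ∩ G.neighborFinset (v i)) ∪
        (G.neighborFinset (v i) ∩ G.neighborFinset (v (i + 2)))).card := by
        rw [Finset.card_union_of_disjoint hdisj]
    _ ≤ (G.neighborFinset (v i)).card := by
        apply Finset.card_le_card
        intro x hx
        simp only [Finset.mem_union, Finset.mem_inter] at hx
        rcases hx with h | h
        · exact h.2
        · exact h.1
    _ = G.degree (v i) := (G.card_neighborFinset_eq_degree _)
end

section
/- Let n >= 10^9 be odd and k even with 2n/5 < k < n/2, and let G be an n-vertex k-regular graph with T(G) <= (k/4)(3k - n - 1). Let H be the subgraph of heavy edges (edges in at least (3k-n-1)/3 triangles). Then |E(H)| <= 9k/4. -/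
/-!
Every triangle contains exactly three edges, so the codegrees of the edges sum to at most
`3 T(G)`. An edge is heavy when three times its codegree is at least `t = 3k - n - 1 > 0`, so
`|E(H)| t ≤ 9 T(G) ≤ (9k/4) t`.
-/

open Finset

lemma Sym2.eq_of_insert_toFinset_eq {α : Type*} [DecidableEq α] {e e' : Sym2 α} {w : α}
    (hw : w ∉ e) (hw' : w ∉ e') (h : insert w e.toFinset = insert w e'.toFinset) : e = e' := by
  have hfin : e.toFinset = e'.toFinset := by
    rw [← erase_insert (mt Sym2.mem_toFinset.1 hw), h, erase_insert (mt Sym2.mem_toFinset.1 hw')]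
  exact Sym2.ext fun x => by rw [← Sym2.mem_toFinset, hfin, Sym2.mem_toFinset]

namespace SimpleGraph

variable {V : Type*} [Fintype V] [DecidableEq V] (G : SimpleGraph V) [DecidableRel G.Adj]

def edgeCodegree : Sym2 V → ℕ :=
  Sym2.lift ⟨fun u v => #(G.neighborFinset u ∩ G.neighborFinset v),
    fun u v => by simp only [Finset.inter_comm]⟩

lemma edgeCodegree_eq_card_filter (e : Sym2 V) :
    G.edgeCodegree e = #{w | e.toFinset ⊆ G.neighborFinset w} := by
  induction e using Sym2.ind with
  | _ u v =>
    change #_ = _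
    congr 1
    ext w
    simp [Sym2.toFinset_mk_eq, insert_subset_iff, adj_comm]

lemma insert_toFinset_mem_cliqueFinset_three {e : Sym2 V} {w : V} (he : e ∈ G.edgeFinset)
    (hw : e.toFinset ⊆ G.neighborFinset w) : insert w e.toFinset ∈ G.cliqueFinset 3 := by
  induction e using Sym2.ind with
  | _ u v =>
    rw [Sym2.toFinset_mk_eq, insert_subset_iff, singleton_subset_iff,
      mem_neighborFinset, mem_neighborFinset] at hw
    rw [Sym2.toFinset_mk_eq, mem_cliqueFinset_iff, is3Clique_triple_iff]
    exact ⟨hw.1, hw.2, mem_edgeFinset.1 he⟩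

lemma notMem_of_toFinset_subset_neighborFinset {e : Sym2 V} {w : V}
    (hw : e.toFinset ⊆ G.neighborFinset w) : w ∉ e := fun h =>
  G.loopless.irrefl w (mem_neighborFinset G w w |>.1 (hw (Sym2.mem_toFinset.2 h)))

/-- Sending an edge `e` and a common neighbour `w` of its ends to the triangle `e ∪ {w}`, marked
at `w`, is injective, since `e` is recovered as the triangle minus its mark. -/
lemma sum_edgeCodegree_le_three_mul_card_cliqueFinset :
    ∑ e ∈ G.edgeFinset, G.edgeCodegree e ≤ 3 * #(G.cliqueFinset 3) := by
  let pairs := G.edgeFinset.sigma fun e => ({w | e.toFinset ⊆ G.neighborFinset w} : Finset V)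
  calc ∑ e ∈ G.edgeFinset, G.edgeCodegree e = #pairs := by
        simp only [pairs, card_sigma, edgeCodegree_eq_card_filter]
    _ ≤ #((G.cliqueFinset 3).sigma fun t => t) := by
        refine card_le_card_of_injOn (fun p => ⟨insert p.2 p.1.toFinset, p.2⟩) ?_ ?_
        · rintro ⟨e, w⟩ hp
          simp only [pairs, coe_sigma, Set.mem_sigma_iff, mem_coe, mem_filter_univ] at hp
          simp only [coe_sigma, Set.mem_sigma_iff, mem_coe, mem_insert_self, and_true]
          exact G.insert_toFinset_mem_cliqueFinset_three hp.1 hp.2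
        · rintro ⟨e, w⟩ hp ⟨e', w'⟩ hp' h
          simp only [pairs, coe_sigma, Set.mem_sigma_iff, mem_coe, mem_filter_univ] at hp hp'
          simp only [Sigma.mk.injEq] at h
          obtain ⟨rfl⟩ := h.2
          exact Sigma.ext (Sym2.eq_of_insert_toFinset_eq
            (G.notMem_of_toFinset_subset_neighborFinset hp.2)
            (G.notMem_of_toFinset_subset_neighborFinset hp'.2) h.1) HEq.rfl
    _ = 3 * #(G.cliqueFinset 3) := by
        rw [card_sigma, sum_const_nat fun t ht => (mem_cliqueFinset_iff.1 ht).2, mul_comm]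

lemma card_filter_le_three_mul_edgeCodegree_mul_le (t : ℤ) :
    (#{e ∈ G.edgeFinset | t ≤ 3 * (G.edgeCodegree e : ℤ)} : ℤ) * t ≤
      9 * #(G.cliqueFinset 3) := by
  set heavy := {e ∈ G.edgeFinset | t ≤ 3 * (G.edgeCodegree e : ℤ)}
  calc (#heavy : ℤ) * t = ∑ _e ∈ heavy, t := by rw [sum_const, nsmul_eq_mul]
    _ ≤ ∑ e ∈ heavy, 3 * (G.edgeCodegree e : ℤ) := sum_le_sum fun e he => (mem_filter.1 he).2
    _ ≤ ∑ e ∈ G.edgeFinset, 3 * (G.edgeCodegree e : ℤ) :=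
        sum_le_sum_of_subset_of_nonneg (filter_subset _ _) fun _ _ _ => by positivity
    _ = 3 * ((∑ e ∈ G.edgeFinset, G.edgeCodegree e : ℕ) : ℤ) := by
        rw [← mul_sum]; push_cast; rfl
    _ ≤ 9 * #(G.cliqueFinset 3) := by
        have := G.sum_edgeCodegree_le_three_mul_card_cliqueFinset
        omega

end SimpleGraph

open Finset SimpleGraph

/-- If `n ≥ 10⁹` is odd, `k` is even with `2n/5 < k < n/2`, and `G` is an `n`-vertex
`k`-regular graph with at most `(k/4)(3k − n − 1)` triangles, then the number of heavy edges
(edges lying in at least `(3k − n − 1)/3` triangles) is at most `9k/4`. -/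
theorem stmt17 {V : Type*} [Fintype V] [DecidableEq V] (G : SimpleGraph V)
    [DecidableRel G.Adj] (n k : ℕ)
    (hn9 : 10 ^ 9 ≤ n)
    (hk1 : 2 * n < 5 * k)
    (hT : 4 * ((G.cliqueFinset 3).card : ℤ) ≤ k * (3 * k - n - 1)) :
    4 * ((G.edgeFinset.filter fun e =>
        3 * ((Sym2.lift ⟨fun u v => (G.neighborFinset u ∩ G.neighborFinset v).card,
          fun u v => by simp [Finset.inter_comm]⟩ e : ℕ) : ℤ) ≥ 3 * k - n - 1).card : ℤ) ≤
      9 * k := by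
  have ht : (0 : ℤ) < 3 * k - n - 1 := by omega
  have hheavy := G.card_filter_le_three_mul_edgeCodegree_mul_le (3 * k - n - 1)
  refine le_of_mul_le_mul_right ?_ ht
  calc 4 * _ * (3 * (k : ℤ) - n - 1) ≤ 4 * (9 * #(G.cliqueFinset 3)) := by
        rw [mul_assoc]; exact mul_le_mul_of_nonneg_left hheavy (by norm_num)
    _ ≤ 9 * k * (3 * k - n - 1) := by linarith
end
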